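/- arXiv:2111.13914 — 4 statements merged into one kernel-verified Lean document; each statement's English description precedes it below -/
import Mathlib

section
/- Let g : ℕ → ℝ be nonnegative and superlinear, i.e., g(n) ≥ 0 for all n and n·g(m) ≤ m·g(n) whenever 1 ≤ m ≤ n. Let ρ, d, k be natural numbers with ρ ≤ d and k ≥ 1, and let a_ρ, a_{ρ+1}, …, a_d be natural numbers with a_i ≤ k for every i ∈ {ρ, …, d}. If g(2^d) > 0, then the total LCCV runtime satisfies the strict inequality ∑_{i=ρ}^{d} a_i · g(2^i) < 2 · k · g(2^d); that is, the runtime of LCCV is less than twice the runtime of kCV. -/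
/-!
A superlinear `g` satisfies `g m ≤ (g N / N) · m` for `m ≤ N`, so evaluating at most `k` times at
each anchor `2^i ≤ 2^d` costs at most `k · (g (2^d) / 2^d) · ∑ 2^i`, and the geometric sum
`∑_{i ≤ d} 2^i` is strictly below `2^(d+1)`.
-/

open Finset

def Superlinear (g : ℕ → ℝ) : Prop :=
  ∀ m n : ℕ, 1 ≤ m → m ≤ n → (n : ℝ) * g m ≤ (m : ℝ) * g n

namespace Superlinear

variable {g : ℕ → ℝ}

theorem le_div_mul (hg : Superlinear g) {m n : ℕ} (hm : 1 ≤ m) (hmn : m ≤ n) :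
    g m ≤ g n / n * m := by
  have hn : (0 : ℝ) < n := by exact_mod_cast hm.trans hmn
  rw [div_mul_eq_mul_div, le_div_iff₀ hn, mul_comm (g m), mul_comm (g n)]
  exact hg m n hm hmn

theorem sum_mul_le {ι : Type*} (hg : Superlinear g) {s : Finset ι} {n : ι → ℕ} {N k : ℕ}
    {a : ι → ℕ} (hN : 0 ≤ g N) (hn : ∀ i ∈ s, 1 ≤ n i ∧ n i ≤ N) (ha : ∀ i ∈ s, a i ≤ k) :
    ∑ i ∈ s, (a i : ℝ) * g (n i) ≤ k * (g N / N) * ∑ i ∈ s, (n i : ℝ) := by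
  rw [mul_sum]
  refine sum_le_sum fun i hi => ?_
  obtain ⟨hn₁, hnN⟩ := hn i hi
  calc (a i : ℝ) * g (n i) ≤ a i * (g N / N * n i) :=
        mul_le_mul_of_nonneg_left (hg.le_div_mul hn₁ hnN) (Nat.cast_nonneg _)
    _ ≤ k * (g N / N * n i) := by gcongr; exact ha i hi
    _ = k * (g N / N) * n i := by ring

end Superlinear

theorem lccv_runtime_lt_twice_kcv_general
    (g : ℕ → ℝ)
    (hg_super : ∀ m n : ℕ, 1 ≤ m → m ≤ n → (n : ℝ) * g m ≤ (m : ℝ) * g n)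
    (ρ d k : ℕ) (hk : 1 ≤ k)
    (a : ℕ → ℕ) (ha : ∀ i, ρ ≤ i → i ≤ d → a i ≤ k)
    (hpos : 0 < g (2 ^ d)) :
    ∑ i ∈ Finset.Icc ρ d, (a i : ℝ) * g (2 ^ i) < 2 * (k : ℝ) * g (2 ^ d) := by
  have hsum : ∑ i ∈ Icc ρ d, ((2 ^ i : ℕ) : ℝ) < 2 * 2 ^ d := by
    rw [← pow_succ', ← Nat.cast_sum]
    exact_mod_cast Nat.geomSum_lt le_rfl fun i hi => Nat.lt_succ_of_le (mem_Icc.1 hi).2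
  have hrate : 0 < (k : ℝ) * (g (2 ^ d) / (2 ^ d : ℕ)) := by
    have : (0 : ℝ) < k := by exact_mod_cast hk
    positivity
  calc ∑ i ∈ Icc ρ d, (a i : ℝ) * g (2 ^ i)
      ≤ k * (g (2 ^ d) / (2 ^ d : ℕ)) * ∑ i ∈ Icc ρ d, ((2 ^ i : ℕ) : ℝ) :=
        Superlinear.sum_mul_le hg_super hpos.le
          (fun i hi => ⟨Nat.one_le_two_pow, Nat.pow_le_pow_right two_pos (mem_Icc.1 hi).2⟩)
          (fun i hi => ha i (mem_Icc.1 hi).1 (mem_Icc.1 hi).2)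
    _ < k * (g (2 ^ d) / (2 ^ d : ℕ)) * (2 * 2 ^ d) := mul_lt_mul_of_pos_left hsum hrate
    _ = 2 * k * g (2 ^ d) := by push_cast; field_simp

/-- The runtime of LCCV is strictly less than twice the runtime of kCV:
for a nonnegative superlinear runtime function `g`, anchor exponents `ρ, …, d`,
at most `k` evaluations per anchor, and `g (2^d) > 0`, we have
`∑_{i=ρ}^{d} a_i · g(2^i) < 2 · k · g(2^d)`. -/
theorem lccv_runtime_lt_twice_kcv
    (g : ℕ → ℝ)
    (hg_nonneg : ∀ n, 0 ≤ g n)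
    (hg_super : ∀ m n : ℕ, 1 ≤ m → m ≤ n → (n : ℝ) * g m ≤ (m : ℝ) * g n)
    (ρ d k : ℕ) (hρd : ρ ≤ d) (hk : 1 ≤ k)
    (a : ℕ → ℕ) (ha : ∀ i, ρ ≤ i → i ≤ d → a i ≤ k)
    (hpos : 0 < g (2 ^ d)) :
    ∑ i ∈ Finset.Icc ρ d, (a i : ℝ) * g (2 ^ i) < 2 * (k : ℝ) * g (2 ^ d) :=
  lccv_runtime_lt_twice_kcv_general g hg_super ρ d k hk a ha hpos
end

section
/- Let g : ℕ → ℝ be nonnegative and superlinear, i.e., g(n) ≥ 0 for all n and n·g(m) ≤ m·g(n) whenever 1 ≤ m ≤ n. Let ρ, d, k be natural numbers with ρ ≤ d and k ≥ 1, and let a_ρ, a_{ρ+1}, …, a_d be natural numbers with a_i ≤ k for every i ∈ {ρ, …, d}. Then ∑_{i=ρ}^{d} a_i · g(2^i) ≤ (2 − 2^{−(d−ρ)}) · k · g(2^d). -/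
/-! Superlinearity gives `g(2^i) ≤ 2^(i-d) · g(2^d)` for every anchor `i ≤ d`, so the whole sum is
at most `k · g(2^d)` times the geometric sum `∑_{i=ρ}^{d} 2^(i-d) = 2 - 2^(-(d-ρ))`. -/

open Finset

lemma apply_le_mul_div_of_superlinear {g : ℕ → ℝ}
    (hg : ∀ m n : ℕ, 1 ≤ m → m ≤ n → (n : ℝ) * g m ≤ (m : ℝ) * g n)
    {m n : ℕ} (hm : 1 ≤ m) (hmn : m ≤ n) :
    g m ≤ g n * ((m : ℝ) / n) := by
  have hn : (0 : ℝ) < n := by exact_mod_cast hm.trans hmn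
  rw [mul_div_assoc', le_div_iff₀ hn, mul_comm (g n)]
  linarith [hg m n hm hmn]

lemma sum_Icc_two_pow_div_two_pow {ρ d : ℕ} (hρd : ρ ≤ d) :
    ∑ i ∈ Icc ρ d, (2 : ℝ) ^ i / 2 ^ d = 2 - (2 : ℝ) ^ (-((d : ℤ) - (ρ : ℤ))) := by
  rw [← sum_div, ← Ico_add_one_right_eq_Icc, geom_sum_Ico (by norm_num) (by omega),
    neg_sub, zpow_sub₀ two_ne_zero, zpow_natCast, zpow_natCast]
  field_simp
  ring

theorem lccv_runtime_le_refined_bound_general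
    (g : ℕ → ℝ)
    (hg_nonneg : ∀ n, 0 ≤ g n)
    (hg_super : ∀ m n : ℕ, 1 ≤ m → m ≤ n → (n : ℝ) * g m ≤ (m : ℝ) * g n)
    (ρ d k : ℕ) (hρd : ρ ≤ d)
    (a : ℕ → ℕ) (ha : ∀ i, ρ ≤ i → i ≤ d → a i ≤ k) :
    ∑ i ∈ Finset.Icc ρ d, (a i : ℝ) * g (2 ^ i)
      ≤ (2 - (2 : ℝ) ^ (-((d : ℤ) - (ρ : ℤ)))) * (k : ℝ) * g (2 ^ d) := by
  have hterm : ∀ i ∈ Icc ρ d,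
      (a i : ℝ) * g (2 ^ i) ≤ (k : ℝ) * (g (2 ^ d) * ((2 : ℝ) ^ i / 2 ^ d)) := by
    intro i hi
    obtain ⟨hρi, hid⟩ := mem_Icc.mp hi
    have hg_anchor := apply_le_mul_div_of_superlinear hg_super Nat.one_le_two_pow
      (Nat.pow_le_pow_right two_pos hid)
    push_cast at hg_anchor
    exact mul_le_mul (by exact_mod_cast ha i hρi hid) hg_anchor (hg_nonneg _) k.cast_nonneg
  calc ∑ i ∈ Icc ρ d, (a i : ℝ) * g (2 ^ i)
      ≤ ∑ i ∈ Icc ρ d, (k : ℝ) * (g (2 ^ d) * ((2 : ℝ) ^ i / 2 ^ d)) := sum_le_sum hterm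
    _ = (∑ i ∈ Icc ρ d, (2 : ℝ) ^ i / 2 ^ d) * k * g (2 ^ d) := by
      rw [← mul_sum, ← mul_sum]; ring
    _ = (2 - (2 : ℝ) ^ (-((d : ℤ) - (ρ : ℤ)))) * k * g (2 ^ d) := by
      rw [sum_Icc_two_pow_div_two_pow hρd]

/-- Quantitative LCCV runtime bound: for a nonnegative superlinear runtime
function `g`, anchor exponents `ρ, …, d` and at most `k` evaluations per anchor,
`∑_{i=ρ}^{d} a_i · g(2^i) ≤ (2 − 2^{−(d−ρ)}) · k · g(2^d)`. -/
theorem lccv_runtime_le_refined_bound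
    (g : ℕ → ℝ)
    (hg_nonneg : ∀ n, 0 ≤ g n)
    (hg_super : ∀ m n : ℕ, 1 ≤ m → m ≤ n → (n : ℝ) * g m ≤ (m : ℝ) * g n)
    (ρ d k : ℕ) (hρd : ρ ≤ d) (hk : 1 ≤ k)
    (a : ℕ → ℕ) (ha : ∀ i, ρ ≤ i → i ≤ d → a i ≤ k) :
    ∑ i ∈ Finset.Icc ρ d, (a i : ℝ) * g (2 ^ i)
      ≤ (2 - (2 : ℝ) ^ (-((d : ℤ) - (ρ : ℤ)))) * (k : ℝ) * g (2 ^ d) :=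
  lccv_runtime_le_refined_bound_general g hg_nonneg hg_super ρ d k hρd a ha
end

section
/- Let f : ℝ → ℝ be convex on the closed interval [s₁, s_T], let s₁ < s₂ ≤ s_T be real numbers, and let L, U be real numbers such that f(s₁) ≤ U and f(s₂) ≥ L. Then f(s_T) ≥ L + (s_T − s₂) · (L − U) / (s₂ − s₁). -/
/-- LCCV's optimistic extrapolation bound (Eq. 7): if `f` is convex on `[s₁, s_T]`,
`s₁ < s₂ ≤ s_T`, `f(s₁) ≤ U` and `f(s₂) ≥ L`, then
`f(s_T) ≥ L + (s_T − s₂)·(L − U)/(s₂ − s₁)`. -/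
theorem lccv_optimistic_extrapolation
    (f : ℝ → ℝ) (s₁ s₂ sT L U : ℝ)
    (h12 : s₁ < s₂) (h2T : s₂ ≤ sT)
    (hf : ConvexOn ℝ (Set.Icc s₁ sT) f)
    (hU : f s₁ ≤ U) (hL : f s₂ ≥ L) :
    f sT ≥ L + (sT - s₂) * (L - U) / (s₂ - s₁) := by
  rcases eq_or_lt_of_le h2T with h | h
  · rw [← h]
    have : (s₂ - s₂) * (L - U) / (s₂ - s₁) = 0 := by ring
    rw [this]; linarith
  · have h1T : s₁ ≤ sT := le_of_lt (h12.trans h)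
    have hslope := hf.slope_mono_adjacent
      (Set.mem_Icc.mpr ⟨le_refl _, h1T⟩)
      (Set.mem_Icc.mpr ⟨h1T, le_refl _⟩) h12 h
    unfold slope at hslope
    have h21 : (0:ℝ) < s₂ - s₁ := by linarith
    have hT2 : (0:ℝ) < sT - s₂ := by linarith
    rw [div_le_div_iff₀ h21 hT2] at hslope
    have key : (sT - s₂) * (L - U) / (s₂ - s₁) ≤ f sT - L := by
      rw [div_le_iff₀ h21]
      nlinarith
    linarith
end

section
/- Let f : ℝ → ℝ be convex on the closed interval [s₁, s_T], let s₁ < s₂ ≤ s_T be real numbers, let L, U be real numbers with f(s₁) ≤ U and f(s₂) ≥ L, and let r be a real number. If L + (s_T − s₂) · (L − U) / (s₂ − s₁) > r, then f(s_T) > r. -/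
/-- Soundness of LCCV's pruning rule: if `f` is convex on `[s₁, s_T]`,
`s₁ < s₂ ≤ s_T`, `f(s₁) ≤ U`, `f(s₂) ≥ L`, and the optimistic extrapolation
`L + (s_T − s₂)·(L − U)/(s₂ − s₁)` already exceeds the reference score `r`,
then the true value `f(s_T)` exceeds `r` as well. -/
theorem lccv_pruning_sound
    (f : ℝ → ℝ) (s₁ s₂ sT L U r : ℝ)
    (h12 : s₁ < s₂) (h2T : s₂ ≤ sT)
    (hf : ConvexOn ℝ (Set.Icc s₁ sT) f)
    (hU : f s₁ ≤ U) (hL : f s₂ ≥ L)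
    (hr : L + (sT - s₂) * (L - U) / (s₂ - s₁) > r) :
    f sT > r := by
  rcases eq_or_lt_of_le h2T with h | h
  · subst h
    have : (s₂ - s₂) * (L - U) / (s₂ - s₁) = 0 := by
      simp
    linarith [this ▸ hr]
  · have h1T : s₁ ≤ sT := le_of_lt (h12.trans h)
    have hslope := hf.slope_mono_adjacent
      (Set.mem_Icc.mpr ⟨le_refl s₁, h1T⟩)
      (Set.mem_Icc.mpr ⟨h1T, le_refl sT⟩) h12 h
    have h21 : (0:ℝ) < s₂ - s₁ := by linarith
    have hT2 : (0:ℝ) < sT - s₂ := by linarith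
    -- f sT ≥ f s₂ + (sT - s₂) * (f s₂ - f s₁) / (s₂ - s₁)
    have key : (sT - s₂) * (f s₂ - f s₁) / (s₂ - s₁) ≤ f sT - f s₂ := by
      have := (div_le_div_iff₀ h21 hT2).mp hslope
      rw [div_le_iff₀ h21]
      nlinarith
    have hmono : (sT - s₂) * (L - U) / (s₂ - s₁) ≤
        (sT - s₂) * (f s₂ - f s₁) / (s₂ - s₁) := by
      exact (div_le_div_iff_of_pos_right h21).mpr (by nlinarith)
    linarith
end
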